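/- Let n > 1 be an integer and K any field. Consider the following list of polynomials over K (images of integer polynomials in the variable t): 0; 1; t^i for 1 ≤ i ≤ n+1; t^{i−1}·(t+1) for 1 ≤ i ≤ n−1; and for 1 ≤ j ≤ n−1 the polynomials t^{j+2} + j·t^j + (j−1)·t^{j−1} and t^{j+2} + (j+1)·t^j + j·t^{j−1}. Then all of these polynomials are pairwise distinct as elements of K[t], regardless of the characteristic of K. Consequently, there exists a finite subset S ⊆ K, all of whose elements are algebraic over the prime subfield of K, such that for every t_0 ∈ K ∖ S the evaluations of these polynomials at t_0 are pairwise distinct elements of K. -/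

import Mathlib

/-!
Polynomials of different degrees differ. Of degree `d` the list has at most four members:
`X^d`, `X^(d-1) (X+1)` and two trinomials `X^d + c X^(d-2) + e X^(d-3)` whose pairs of
coefficients `(c, e)` are `(j+1, j)` and `(j+2, j+1)`. Only `X^(d-1) (X+1)` vanishes at `-1`, and
its `X^(d-1)` coefficient is `1` where the others have `0`; consecutive integers are never both `0`
in `K`, so no trinomial is `X^d`; and the trinomials differ in their `X^(d-3)` coefficients.

All the polynomials have coefficients in the prime field `k`, so if two distinct ones agree at
`t₀`, then `t₀` is a root of their nonzero difference in `k[X]`: it is algebraic over `k`, and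
there are finitely many such roots.
-/

open Polynomial

noncomputable section

/-- The list of polynomials over `K` appearing in the construction of the system `Φ_n`:
`0`; `1`; `t^i` for `1 ≤ i ≤ n+1`; `t^(i-1)(t+1)` for `1 ≤ i ≤ n-1`; and, for
`1 ≤ j ≤ n-1`, the polynomials `t^(j+2) + j t^j + (j-1) t^(j-1)` and
`t^(j+2) + (j+1) t^j + j t^(j-1)`. -/
def polyList (K : Type) [Field K] (n : ℕ) : List (Polynomial K) :=
  [0, 1] ++
  ((List.range (n + 1)).map fun i => (X : K[X]) ^ (i + 1)) ++
  ((List.range (n - 1)).map fun i => (X : K[X]) ^ i * (X + 1)) ++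
  ((List.range (n - 1)).map fun j =>
    (X : K[X]) ^ (j + 3) + C ((j + 1 : ℕ) : K) * X ^ (j + 1) + C ((j : ℕ) : K) * X ^ j) ++
  ((List.range (n - 1)).map fun j =>
    (X : K[X]) ^ (j + 3) + C ((j + 2 : ℕ) : K) * X ^ (j + 1) + C ((j + 1 : ℕ) : K) * X ^ j)

namespace Polynomial

section Semiring

variable {R : Type*} [Semiring R]

def gapTrinomial (j : ℕ) (c d : R) : R[X] := X ^ (j + 3) + C c * X ^ (j + 1) + C d * X ^ j

theorem coeff_gapTrinomial (j : ℕ) (c d : R) (m : ℕ) :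
    (gapTrinomial j c d).coeff m =
      (if m = j + 3 then 1 else 0) + (if m = j + 1 then c else 0) + (if m = j then d else 0) := by
  simp [gapTrinomial, coeff_X_pow, coeff_C_mul, mul_ite]

variable [Nontrivial R]

@[simp]
theorem natDegree_gapTrinomial (j : ℕ) (c d : R) : (gapTrinomial j c d).natDegree = j + 3 := by
  unfold gapTrinomial
  compute_degree!

@[simp]
theorem natDegree_X_pow_mul_X_add_one (i : ℕ) : ((X : R[X]) ^ i * (X + 1)).natDegree = i + 1 := by
  compute_degree!

theorem gapTrinomial_inj {j k : ℕ} {c d c' d' : R} :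
    gapTrinomial j c d = gapTrinomial k c' d' ↔ j = k ∧ c = c' ∧ d = d' := by
  refine ⟨fun h => ?_, by rintro ⟨rfl, rfl, rfl⟩; rfl⟩
  obtain rfl : j = k := by simpa using congrArg natDegree h
  have hc : c = c' := by simpa [coeff_gapTrinomial] using congrArg (coeff · (j + 1)) h
  have hd : d = d' := by simpa [coeff_gapTrinomial] using congrArg (coeff · j) h
  exact ⟨rfl, hc, hd⟩

theorem X_pow_ne_gapTrinomial (m j : ℕ) {c d : R} (hcd : c ≠ 0 ∨ d ≠ 0) :
    X ^ m ≠ gapTrinomial j c d := by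
  intro h
  obtain rfl : m = j + 3 := by simpa using congrArg natDegree h
  have hc : 0 = c := by simpa [coeff_gapTrinomial, coeff_X_pow] using congrArg (coeff · (j + 1)) h
  have hd : 0 = d := by simpa [coeff_gapTrinomial, coeff_X_pow] using congrArg (coeff · j) h
  exact hcd.elim (· hc.symm) (· hd.symm)

theorem X_pow_mul_X_add_one_ne_gapTrinomial (i j : ℕ) (c d : R) :
    X ^ i * (X + 1) ≠ gapTrinomial j c d := by
  intro h
  obtain rfl : i = j + 2 := by simpa using congrArg natDegree h
  simpa [coeff_gapTrinomial, mul_add, ← pow_succ, coeff_X_pow] using congrArg (coeff · (j + 2)) h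

end Semiring

theorem X_pow_ne_X_pow_mul_X_add_one {R : Type*} [CommRing R] [Nontrivial R] (m i : ℕ) :
    (X : R[X]) ^ m ≠ X ^ i * (X + 1) :=
  ne_of_apply_ne (eval (-1)) (by simpa using neg_one_pow_ne_zero m)

theorem exists_finset_isAlgebraic_injOn_aeval {R A : Type*} [CommRing R] [IsDomain R]
    [CommRing A] [IsDomain A] [Algebra R A] [Module.IsTorsionFree R A] {s : Set R[X]}
    (hs : s.Finite) : ∃ S : Finset A, (∀ x ∈ S, IsAlgebraic R x) ∧ ∀ t ∉ S, s.InjOn (aeval t) := by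
  classical
  refine ⟨hs.toFinset.offDiag.biUnion fun pq => ((pq.1 - pq.2).aroots A).toFinset, ?_, ?_⟩
  · simp only [Finset.mem_biUnion, Multiset.mem_toFinset, mem_aroots]
    rintro x ⟨pq, -, hne, hx⟩
    exact ⟨_, hne, hx⟩
  · intro t ht p hp q hq h
    by_contra hpq
    refine ht (Finset.mem_biUnion.mpr ⟨(p, q), by simpa using ⟨hp, hq, hpq⟩, ?_⟩)
    rw [Multiset.mem_toFinset, mem_aroots]
    exact ⟨sub_ne_zero.mpr hpq, by simp [h]⟩

end Polynomial

theorem polyList_eq (K : Type) [Field K] (n : ℕ) :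
    polyList K n = [0, 1] ++
      ((List.range (n + 1)).map fun i => (X : K[X]) ^ (i + 1)) ++
      ((List.range (n - 1)).map fun i => (X : K[X]) ^ i * (X + 1)) ++
      ((List.range (n - 1)).map fun j => gapTrinomial j ((j + 1 : ℕ) : K) (j : ℕ)) ++
      ((List.range (n - 1)).map fun j => gapTrinomial j ((j + 2 : ℕ) : K) (j + 1 : ℕ)) :=
  rfl

theorem nodup_polyList (K : Type) [Field K] (n : ℕ) : (polyList K n).Nodup := by
  have consecutive_ne_zero (j : ℕ) : ((j + 1 : ℕ) : K) ≠ 0 ∨ ((j : ℕ) : K) ≠ 0 := by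
    by_contra! h
    simpa [h.2] using h.1
  rw [polyList_eq]
  simp only [List.nodup_append, List.nodup_cons, List.forall_mem_map, List.forall_mem_append,
    List.forall_mem_cons, List.mem_range, List.not_mem_nil, List.nodup_nil, List.mem_singleton,
    zero_ne_one, not_false_eq_true, and_true, true_and, forall_eq]
  and_intros
  -- `natDegree` separates every pair except those between families sharing a degree.
  any_goals first
    | exact List.nodup_range.map fun i j h => by simpa using congrArg natDegree h
    | intro j _; apply ne_of_apply_ne natDegree; simp
  · exact fun i _ j _ => X_pow_ne_X_pow_mul_X_add_one _ _
  · exact fun i _ j _ => X_pow_ne_gapTrinomial _ _ (consecutive_ne_zero j)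
  · exact fun i _ j _ => X_pow_mul_X_add_one_ne_gapTrinomial _ _ _ _
  · exact fun i _ j _ => X_pow_ne_gapTrinomial _ _ (consecutive_ne_zero (j + 1))
  · exact fun i _ j _ => X_pow_mul_X_add_one_ne_gapTrinomial _ _ _ _
  · intro j _ k _ h
    obtain ⟨rfl, -, h⟩ := gapTrinomial_inj.mp h
    push_cast at h
    simp at h

theorem map_polyList {k K : Type} [Field k] [Field K] (f : k →+* K) (n : ℕ) :
    (polyList k n).map (Polynomial.map f) = polyList K n := by
  simp only [polyList, List.map_append, List.map_map, List.map_cons, List.map_nil, Function.comp_def,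
    Polynomial.map_zero, Polynomial.map_one, Polynomial.map_add, Polynomial.map_mul, Polynomial.map_pow,
    Polynomial.map_X, map_natCast, Polynomial.map_natCast]

theorem stmt_19_general (K : Type) [Field K] (n : ℕ) :
    (polyList K n).Nodup ∧
    ∃ S : Finset K, (∀ s ∈ S, IsAlgebraic (⊥ : Subfield K) s) ∧
      ∀ t₀ : K, t₀ ∉ S → ((polyList K n).map (fun p => p.eval t₀)).Nodup := by
  obtain ⟨S, hS, hinj⟩ :=
    exists_finset_isAlgebraic_injOn_aeval (A := K) (polyList (⊥ : Subfield K) n).finite_toSet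
  refine ⟨nodup_polyList K n, S, hS, fun t ht => ?_⟩
  rw [← map_polyList (algebraMap (⊥ : Subfield K) K), List.map_map]
  refine (nodup_polyList _ n).map_on fun p hp q hq h => hinj t ht hp hq ?_
  simpa only [Function.comp_apply, eval_map_algebraMap] using h

/-- the polynomials in `polyList` are pairwise distinct in `K[t]` regardless
of the characteristic of `K`, and there is a finite set `S ⊆ K` of elements algebraic over
the prime subfield of `K` such that the evaluations at any `t₀ ∉ S` are pairwise distinct. -/
theorem stmt_19 (K : Type) [Field K] (n : ℕ) (hn : 1 < n) :
    (polyList K n).Nodup ∧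
    ∃ S : Finset K, (∀ s ∈ S, IsAlgebraic (⊥ : Subfield K) s) ∧
      ∀ t₀ : K, t₀ ∉ S → ((polyList K n).map (fun p => p.eval t₀)).Nodup :=
  stmt_19_general K n
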